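/- Let (K_m)_{m∈ι} be a finite family of n'×n complex matrices with Σ_m K_mᴴ · K_m = 1ₙ, and let Λ(X) = Σ_m K_m · X · K_mᴴ be the associated quantum channel. Let (X_i)_{i∈κ} be a family of n×n complex matrices and (X'_i)_{i∈κ} a family of n'×n' complex matrices such that K_m · X_i = X'_i · K_m for all m ∈ ι and i ∈ κ. Then for every n×n complex matrix ρ and all i, j ∈ κ: Tr(Λ(ρ) · X'_i) = Tr(ρ · X_i) and Tr(Λ(ρ) · X'_i · X'_j) = Tr(ρ · X_i · X_j). Consequently both the non-symmetrized and the symmetrized covariance matrices of Λ(ρ) with respect to (X'_i) coincide with those of ρ with respect to (X_i). -/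
import Mathlib


open Matrix

/-- **A quantum channel whose Kraus operators intertwine the observables `X_i` with `X'_i`
preserves first and second moments, hence preserves both covariance matrices.** -/
theorem kraus_intertwining_preserves_moments
    {n n' : ℕ} {ι κ : Type*} [Fintype ι]
    (K : ι → Matrix (Fin n') (Fin n) ℂ)
    (hK : ∑ m, (K m)ᴴ * K m = 1)
    (X : κ → Matrix (Fin n) (Fin n) ℂ)
    (X' : κ → Matrix (Fin n') (Fin n') ℂ)
    (hint : ∀ (m : ι) (i : κ), K m * X i = X' i * K m)
    (ρ : Matrix (Fin n) (Fin n) ℂ) :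
    (∀ i : κ, ((∑ m, K m * ρ * (K m)ᴴ) * X' i).trace = (ρ * X i).trace) ∧
    (∀ i j : κ, ((∑ m, K m * ρ * (K m)ᴴ) * (X' i * X' j)).trace = (ρ * (X i * X j)).trace) ∧
    (∀ i j : κ,
      ((∑ m, K m * ρ * (K m)ᴴ) * (X' i * X' j)).trace
          - ((∑ m, K m * ρ * (K m)ᴴ) * X' i).trace * ((∑ m, K m * ρ * (K m)ᴴ) * X' j).trace
        = (ρ * (X i * X j)).trace - (ρ * X i).trace * (ρ * X j).trace) ∧
    (∀ i j : κ,
      ((1 : ℂ) / 2) * ((∑ m, K m * ρ * (K m)ᴴ) * (X' i * X' j + X' j * X' i)).trace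
          - ((∑ m, K m * ρ * (K m)ᴴ) * X' i).trace * ((∑ m, K m * ρ * (K m)ᴴ) * X' j).trace
        = ((1 : ℂ) / 2) * (ρ * (X i * X j + X j * X i)).trace
          - (ρ * X i).trace * (ρ * X j).trace) := by
  have key : ∀ (Y : Matrix (Fin n) (Fin n) ℂ) (Y' : Matrix (Fin n') (Fin n') ℂ),
      (∀ m, Y' * K m = K m * Y) →
      ((∑ m, K m * ρ * (K m)ᴴ) * Y').trace = (ρ * Y).trace := by
    intro Y Y' h
    rw [Finset.sum_mul, trace_sum]
    have : ∀ m : ι, (K m * ρ * (K m)ᴴ * Y').trace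
        = (ρ * ((K m)ᴴ * K m * Y)).trace := by
      intro m
      rw [trace_mul_comm, ← Matrix.mul_assoc, ← Matrix.mul_assoc, h m,
        Matrix.mul_assoc (K m * Y), trace_mul_comm, ← Matrix.mul_assoc,
        Matrix.mul_assoc ρ, Matrix.mul_assoc ρ, Matrix.mul_assoc ((K m)ᴴ)]
    simp_rw [this, ← trace_sum, ← Finset.mul_sum]
    congr 2
    rw [← Finset.sum_mul, hK, Matrix.one_mul]
  have h1 : ∀ i : κ, ((∑ m, K m * ρ * (K m)ᴴ) * X' i).trace = (ρ * X i).trace := by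
    intro i
    exact key (X i) (X' i) (fun m => (hint m i).symm)
  have h2 : ∀ i j : κ, ((∑ m, K m * ρ * (K m)ᴴ) * (X' i * X' j)).trace
      = (ρ * (X i * X j)).trace := by
    intro i j
    refine key (X i * X j) (X' i * X' j) (fun m => ?_)
    rw [Matrix.mul_assoc, ← hint m j, ← Matrix.mul_assoc, ← hint m i, Matrix.mul_assoc]
  refine ⟨h1, h2, fun i j => by rw [h1, h1, h2], fun i j => ?_⟩
  rw [h1, h1, Matrix.mul_add, trace_add, h2, h2, Matrix.mul_add, trace_add]
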